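/- Let g, h : (0, ∞) → [0, ∞) be Lebesgue measurable and suppose g(s) ≤ C₁ h**(s) for all s > 0, for some constant C₁ > 0. Then for every finite family of intervals (a_i, b_i), i = 1, …, m, with 0 < a₁ < b₁ ≤ a₂ < b₂ ≤ ⋯ ≤ a_m < b_m < ∞, one has Σ_{i=1}^m ∫_{a_i}^{b_i} g(s) ds ≤ C₁ (1 + Σ_{i=1}^m log(b_i / a_i)) ∫₀^{Σ_{i=1}^m (b_i − a_i)} h*(s) ds. -/

import Mathlib

open MeasureTheory Set
open scoped ENNReal NNReal

noncomputable section

/-- The decreasing rearrangement of `u` with respect to the measure `μ`: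
`u*(t) = inf { λ ≥ 0 : μ{|u| > λ} ≤ t }`. -/
def decRearr {α : Type*} [MeasurableSpace α] (μ : Measure α) (u : α → ℝ) (t : ℝ) : ℝ :=
  sInf {l : ℝ | 0 ≤ l ∧ μ {x | l < |u x|} ≤ ENNReal.ofReal t}

/-- `u**(t) = (1/t) ∫₀ᵗ u*(s) ds`. -/
def decRearrAvg {α : Type*} [MeasurableSpace α] (μ : Measure α) (u : α → ℝ) (t : ℝ) : ℝ :=
  (1 / t) * ∫ s in Ioc (0 : ℝ) t, decRearr μ u s

abbrev Euc (n : ℕ) := EuclideanSpace ℝ (Fin n)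

/-- `|∇f|(x)`, using the a.e. defined differential (Rademacher's theorem for
locally Lipschitz functions). -/
def gradNorm {n : ℕ} (f : Euc n → ℝ) (x : Euc n) : ℝ := ‖fderiv ℝ f x‖

/-- The admissible class `W(Ω)`: locally Lipschitz on `Ω`, with `f` and `|∇f|`
integrable on `Ω`. -/
def MemW {n : ℕ} (Ω : Set (Euc n)) (f : Euc n → ℝ) : Prop :=
  (∀ x ∈ Ω, ∃ s ∈ nhds x, ∃ K : ℝ≥0, LipschitzOnWith K f s) ∧
    IntegrableOn f Ω ∧ IntegrableOn (gradNorm f) Ω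

/-- `Ω` satisfies the `p`-Sobolev–Poincaré inequality with constant `C₀`. -/
def SPIneq {n : ℕ} (Ω : Set (Euc n)) (p C₀ : ℝ) : Prop :=
  ∀ f : Euc n → ℝ, MemW Ω f →
    (∫ x in Ω, |f x - ∫ y in Ω, f y| ^ p) ^ (1 / p) ≤ C₀ * ∫ x in Ω, gradNorm f x

/-- `r` is a median of `f` on `Ω` (with `|Ω| = 1`). -/
def IsMedian {n : ℕ} (Ω : Set (Euc n)) (f : Euc n → ℝ) (r : ℝ) : Prop :=
  1 / 2 ≤ volume {x ∈ Ω | r ≤ f x} ∧ 1 / 2 ≤ volume {x ∈ Ω | f x ≤ r}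


open Filter Topology

/-!
Since `h*` is nonnegative and nonincreasing, with `L = Σ (bᵢ - aᵢ)` and `A = ∫₀ᴸ h*` one has
`∫₀ˢ h* ≤ (1 + s / L) A` for every `s > 0` (for `s > L` the tail is at most `(s - L) h*(L)`
and `L h*(L) ≤ A`). Hence `g(s) ≤ C₁ h**(s) ≤ C₁ A (1/s + 1/L)`, and integrating over
`(aᵢ, bᵢ)` gives `C₁ A (log (bᵢ/aᵢ) + (bᵢ - aᵢ)/L)`; summing over `i` yields the claim.
-/

section AntitoneOnIoi

variable {f : ℝ → ℝ}

lemma AntitoneOn.integrableOn_Ioc_of_pos (hf : AntitoneOn f (Ioi 0)) {ε T : ℝ} (hε : 0 < ε) :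
    IntegrableOn f (Ioc ε T) :=
  ((hf.mono fun _ hx => hε.trans_le hx.1).integrableOn_isCompact isCompact_Icc).mono_set
    Ioc_subset_Icc_self

lemma AntitoneOn.integrableOn_Ioc_zero (hf : AntitoneOn f (Ioi 0)) {s t : ℝ} (hs : 0 < s)
    (hfs : IntegrableOn f (Ioc 0 s)) : IntegrableOn f (Ioc 0 t) :=
  (hfs.union (hf.integrableOn_Ioc_of_pos hs)).mono_set Ioc_subset_Ioc_union_Ioc

lemma AntitoneOn.setIntegral_Ioc_le_mul (hf : AntitoneOn f (Ioi 0)) {L s : ℝ} (hL : 0 < L)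
    (hLs : L ≤ s) : ∫ t in Ioc L s, f t ≤ (s - L) * f L := by
  have := setIntegral_mono_on (hf.integrableOn_Ioc_of_pos (T := s) hL)
    (integrableOn_const measure_Ioc_lt_top.ne) measurableSet_Ioc
    fun x hx => hf hL (hL.trans hx.1) hx.1.le
  rwa [setIntegral_const, Real.volume_real_Ioc_of_le hLs, smul_eq_mul] at this

lemma AntitoneOn.mul_le_setIntegral_Ioc_zero (hf : AntitoneOn f (Ioi 0)) {L : ℝ} (hL : 0 < L)
    (hfL : IntegrableOn f (Ioc 0 L)) : L * f L ≤ ∫ t in Ioc 0 L, f t := by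
  have := setIntegral_mono_on (integrableOn_const measure_Ioc_lt_top.ne) hfL measurableSet_Ioc
    fun x hx => hf hx.1 hL hx.2
  rwa [setIntegral_const, Real.volume_real_Ioc_of_le hL.le, sub_zero, smul_eq_mul] at this

/-- If `f ∈ L¹(0, L)` fails, both integrals take the junk value `0`. -/
lemma AntitoneOn.setIntegral_Ioc_zero_le (hf : AntitoneOn f (Ioi 0))
    (hf0 : ∀ t ∈ Ioi 0, 0 ≤ f t) {L s : ℝ} (hL : 0 < L) (hs : 0 < s) :
    ∫ t in Ioc 0 s, f t ≤ (1 + s / L) * ∫ t in Ioc 0 L, f t := by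
  by_cases hfL : IntegrableOn f (Ioc 0 L)
  · have hA : 0 ≤ ∫ t in Ioc 0 L, f t :=
      setIntegral_nonneg measurableSet_Ioc fun t ht => hf0 t ht.1
    rcases le_or_gt s L with hsL | hLs
    · calc ∫ t in Ioc 0 s, f t ≤ ∫ t in Ioc 0 L, f t :=
            setIntegral_mono_set hfL ((ae_restrict_iff' measurableSet_Ioc).2
              (Eventually.of_forall fun t ht => hf0 t ht.1)) (Ioc_subset_Ioc_right hsL).eventuallyLE
        _ ≤ (1 + s / L) * ∫ t in Ioc 0 L, f t := le_mul_of_one_le_left hA (by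
            have := div_nonneg hs.le hL.le; linarith)
    · have htail := hf.setIntegral_Ioc_le_mul hL hLs.le
      have hhead := hf.mul_le_setIntegral_Ioc_zero hL hfL
      have hfL0 := hf0 L hL
      rw [← Ioc_union_Ioc_eq_Ioc hL.le hLs.le, setIntegral_union (Ioc_disjoint_Ioc_of_le le_rfl)
        measurableSet_Ioc hfL (hf.integrableOn_Ioc_of_pos hL), add_mul, one_mul]
      gcongr
      rw [div_mul_eq_mul_div, le_div_iff₀ hL]
      nlinarith
  · have hfs : ¬IntegrableOn f (Ioc 0 s) := fun h => hfL (hf.integrableOn_Ioc_zero hs h)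
    rw [integral_undef hfs, integral_undef hfL, mul_zero]

end AntitoneOnIoi

section Rearrangement

variable {α : Type*} [MeasurableSpace α] {μ : Measure α} {u : α → ℝ}

lemma decRearr_nonneg (t : ℝ) : 0 ≤ decRearr μ u t :=
  Real.sInf_nonneg fun _ hl => hl.1

lemma tendsto_measure_lt_abs_atTop (hu : Measurable u) {l : ℝ} (hl : μ {x | l < |u x|} ≠ ⊤) :
    Tendsto (fun c : ℝ => μ {x | c < |u x|}) atTop (𝓝 0) := by
  have hInter : ⋂ c : ℝ, {x | c < |u x|} = ∅ :=
    eq_empty_of_forall_notMem fun x hx => lt_irrefl |u x| (mem_iInter.1 hx |u x|)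
  have := tendsto_measure_iInter_atTop (μ := μ)
    (fun c => (measurableSet_lt measurable_const hu.abs).nullMeasurableSet)
    (fun c d hcd x (hx : d < |u x|) => (show c < |u x| from hcd.trans_lt hx)) ⟨l, hl⟩
  rwa [hInter, measure_empty] at this

lemma decRearr_antitoneOn (hu : Measurable u) : AntitoneOn (decRearr μ u) (Ioi 0) := by
  intro s hs t _ hst
  set S : ℝ → Set ℝ := fun r => {l | 0 ≤ l ∧ μ {x | l < |u x|} ≤ ENNReal.ofReal r}
  change sInf (S t) ≤ sInf (S s)
  have hsub : S s ⊆ S t := fun l hl => ⟨hl.1, hl.2.trans (ENNReal.ofReal_le_ofReal hst)⟩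
  rcases (S s).eq_empty_or_nonempty with hSs | hSs
  · -- `sInf ∅ = 0`, so `S t` must be empty too: a level in `S t` has a tail of finite measure,
    -- and by continuity from above some higher level then lies in `S s`.
    suffices hSt : S t = ∅ by rw [hSs, hSt]
    refine eq_empty_of_forall_notMem fun l hl => ?_
    have hsmall := (tendsto_measure_lt_abs_atTop hu (hl.2.trans_lt ENNReal.ofReal_lt_top).ne
      |>.eventually_lt_const (ENNReal.ofReal_pos.2 hs)).and (eventually_ge_atTop 0)
    obtain ⟨c, hc, hc0⟩ := hsmall.exists
    exact hSs.subset ⟨hc0, hc.le⟩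
  · exact csInf_le_csInf ⟨0, fun l hl => hl.1⟩ hSs hsub

lemma decRearrAvg_le (hu : Measurable u) {L x : ℝ} (hL : 0 < L) (hx : 0 < x) :
    decRearrAvg μ u x ≤ (∫ t in Ioc 0 L, decRearr μ u t) * (x⁻¹ + L⁻¹) := by
  calc decRearrAvg μ u x ≤ 1 / x * ((1 + x / L) * ∫ t in Ioc 0 L, decRearr μ u t) :=
        mul_le_mul_of_nonneg_left ((decRearr_antitoneOn hu).setIntegral_Ioc_zero_le
          (fun t _ => decRearr_nonneg t) hL hx) (by positivity)
    _ = (∫ t in Ioc 0 L, decRearr μ u t) * (x⁻¹ + L⁻¹) := by field_simp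

end Rearrangement

lemma integral_Ioc_mul_inv_add {a b : ℝ} (ha : 0 < a) (hab : a ≤ b) (K c : ℝ) :
    ∫ x in Ioc a b, K * (x⁻¹ + c) = K * (Real.log (b / a) + (b - a) * c) := by
  have hb : 0 < b := ha.trans_le hab
  rw [← intervalIntegral.integral_of_le hab, intervalIntegral.integral_const_mul,
    intervalIntegral.integral_add (intervalIntegrable_inv_iff.2 (.inr (notMem_uIcc_of_lt ha hb)))
      intervalIntegrable_const, integral_inv_of_pos ha hb, intervalIntegral.integral_const,
    smul_eq_mul]

lemma setIntegral_Ioc_le_of_le_mul_inv_add {g : ℝ → ℝ} (hg : Measurable g) {a b K c : ℝ}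
    (ha : 0 < a) (hab : a ≤ b) (hg0 : ∀ x ∈ Ioc a b, 0 ≤ g x)
    (hgK : ∀ x ∈ Ioc a b, g x ≤ K * (x⁻¹ + c)) :
    ∫ x in Ioc a b, g x ≤ K * (Real.log (b / a) + (b - a) * c) := by
  have hcont : ContinuousOn (fun x : ℝ => K * (x⁻¹ + c)) (Icc a b) := by
    fun_prop (disch := exact fun x hx => (ha.trans_le hx.1).ne')
  have hF := (hcont.integrableOn_Icc (μ := volume)).mono_set Ioc_subset_Icc_self
  have hgF : ∀ᵐ x ∂volume.restrict (Ioc a b), ‖g x‖ ≤ K * (x⁻¹ + c) :=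
    (ae_restrict_iff' measurableSet_Ioc).2 <| Eventually.of_forall fun x hx => by
      rw [Real.norm_of_nonneg (hg0 x hx)]; exact hgK x hx
  rw [← integral_Ioc_mul_inv_add ha hab]
  exact setIntegral_mono_on (hF.mono' hg.aestronglyMeasurable hgF) hF measurableSet_Ioc hgK

theorem stmt9_general (C₁ : ℝ) (hC₁ : 0 < C₁) (g h : ℝ → ℝ) (hg : Measurable g)
    (hh : Measurable h)
    (hg0 : ∀ s ∈ Ioi (0 : ℝ), 0 ≤ g s)
    (hgh : ∀ s ∈ Ioi (0 : ℝ), g s ≤ C₁ * decRearrAvg (volume.restrict (Ioi (0 : ℝ))) h s)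
    (m : ℕ) (a b : Fin m → ℝ)
    (ha : ∀ i, 0 < a i) (hab : ∀ i, a i < b i) :
    ∑ i, ∫ s in Ioc (a i) (b i), g s
      ≤ C₁ * (1 + ∑ i, Real.log (b i / a i)) *
          ∫ s in Ioc (0 : ℝ) (∑ i, (b i - a i)),
            decRearr (volume.restrict (Ioi (0 : ℝ))) h s := by
  rcases isEmpty_or_nonempty (Fin m) with hm | hm
  · simp
  set L := ∑ i, (b i - a i)
  set A := ∫ s in Ioc 0 L, decRearr (volume.restrict (Ioi (0 : ℝ))) h s
  have hL : 0 < L := Finset.sum_pos (fun i _ => sub_pos.2 (hab i)) Finset.univ_nonempty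
  have hgA : ∀ x ∈ Ioi (0 : ℝ), g x ≤ C₁ * A * (x⁻¹ + L⁻¹) := fun x hx => by
    rw [mul_assoc]
    exact (hgh x hx).trans (mul_le_mul_of_nonneg_left (decRearrAvg_le hh hL hx) hC₁.le)
  calc ∑ i, ∫ s in Ioc (a i) (b i), g s
      ≤ ∑ i, C₁ * A * (Real.log (b i / a i) + (b i - a i) * L⁻¹) :=
        Finset.sum_le_sum fun i _ => setIntegral_Ioc_le_of_le_mul_inv_add hg (ha i) (hab i).le
          (fun x hx => hg0 x ((ha i).trans hx.1)) (fun x hx => hgA x ((ha i).trans hx.1))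
    _ = C₁ * (1 + ∑ i, Real.log (b i / a i)) * A := by
        rw [← Finset.mul_sum, Finset.sum_add_distrib, ← Finset.sum_mul, mul_inv_cancel₀ hL.ne']
        ring

/-- Let `g, h : (0,∞) → [0,∞)` be measurable with `g ≤ C₁ h**` pointwise on
`(0,∞)`. Then for every finite family of intervals `(aᵢ, bᵢ)` with
`0 < a₁ < b₁ ≤ a₂ < b₂ ≤ ⋯ ≤ a_m < b_m < ∞`:
`Σᵢ ∫_{aᵢ}^{bᵢ} g ≤ C₁ (1 + Σᵢ log(bᵢ/aᵢ)) ∫₀^{Σᵢ(bᵢ−aᵢ)} h*`. -/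
theorem stmt9 (C₁ : ℝ) (hC₁ : 0 < C₁) (g h : ℝ → ℝ) (hg : Measurable g)
    (hh : Measurable h)
    (hg0 : ∀ s ∈ Ioi (0 : ℝ), 0 ≤ g s) (hh0 : ∀ s ∈ Ioi (0 : ℝ), 0 ≤ h s)
    (hgh : ∀ s ∈ Ioi (0 : ℝ), g s ≤ C₁ * decRearrAvg (volume.restrict (Ioi (0 : ℝ))) h s)
    (m : ℕ) (a b : Fin m → ℝ)
    (ha : ∀ i, 0 < a i) (hab : ∀ i, a i < b i)
    (hchain : ∀ i j : Fin m, i < j → b i ≤ a j) :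
    ∑ i, ∫ s in Ioc (a i) (b i), g s
      ≤ C₁ * (1 + ∑ i, Real.log (b i / a i)) *
          ∫ s in Ioc (0 : ℝ) (∑ i, (b i - a i)),
            decRearr (volume.restrict (Ioi (0 : ℝ))) h s :=
  stmt9_general C₁ hC₁ g h hg hh hg0 hgh m a b ha hab
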